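/- Let A₂ = ℤ² be the A₂ root lattice with simple roots α₁, α₂ satisfying B₂(α_j,α_k) = 2δ_{j,k} − δ_{j,k+1} − δ_{j+1,k}, fundamental weights β₁ = (2α₁+α₂)/3, β₂ = (α₁+2α₂)/3, and μ₂(s) := (s₁β₁+s₂β₂)/p for s ∈ ℤ² and p ∈ ℕ. Then A₂ + μ₂(s) = ⋃_{δ∈{0,1}} ( 3(ℤ + (2s₁+s₂+3pδ)/(6p)) β₁ + (ℤ + (s₂−pδ)/(2p)) α₂ ) = ⋃_{δ∈{0,1}} ( 3(ℤ + (2s₂+s₁+3pδ)/(6p)) β₂ + (ℤ + (s₁−pδ)/(2p)) α₁ ), and both unions are disjoint. Moreover, on the linear span of α₁ or of α₂, the quadratic form Q₂ restricts to the rank-one quadratic form Q₁(nα_j) = n². -/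

import Mathlib

/-! Both decompositions are the splitting of `A₂ + μ₂(s)` according to the parity of one
coordinate `νᵢ` of the lattice vector `ν`: expanding `β₁, β₂` in the simple roots, the point of
`pieceB1 p s δ` indexed by `(a, b)` is `ν + μ₂(s)` with `ν = (2a + δ, a + b)`, and symmetrically
for `pieceB2`. The translation `ν ↦ ν + μ₂(s)` is injective, so disjointness of the parity
classes carries over to the pieces. -/

noncomputable section

/-- The simple root `α₁` of `A₂` in the simple-root basis. -/
def a1 : Fin 2 → ℝ := ![1, 0]

/-- The simple root `α₂` of `A₂` in the simple-root basis. -/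
def a2 : Fin 2 → ℝ := ![0, 1]

/-- The fundamental weight `β₁ = (2α₁+α₂)/3`. -/
def b1 : Fin 2 → ℝ := ![2/3, 1/3]

/-- The fundamental weight `β₂ = (α₁+2α₂)/3`. -/
def b2 : Fin 2 → ℝ := ![1/3, 2/3]

/-- The quadratic form `Q₂(n₁α₁+n₂α₂) = n₁² + n₂² − n₁n₂` of `A₂`. -/
def Q2 (x : Fin 2 → ℝ) : ℝ := x 0 ^ 2 + x 1 ^ 2 - x 0 * x 1

/-- The shift `μ₂(s) = (s₁β₁ + s₂β₂)/p`. -/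
def mu2 (p : ℕ) (s : Fin 2 → ℤ) : Fin 2 → ℝ :=
  fun i => ((s 0 : ℝ) * b1 i + (s 1 : ℝ) * b2 i) / p

/-- The shifted lattice `A₂ + μ₂(s)`. -/
def cosetA2 (p : ℕ) (s : Fin 2 → ℤ) : Set (Fin 2 → ℝ) :=
  {x | ∃ ν : Fin 2 → ℤ, x = (fun i => (ν i : ℝ)) + mu2 p s}

/-- The piece `3(ℤ + (2s₁+s₂+3pδ)/(6p)) β₁ + (ℤ + (s₂−pδ)/(2p)) α₂`. -/
def pieceB1 (p : ℕ) (s : Fin 2 → ℤ) (δ : ℤ) : Set (Fin 2 → ℝ) :=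
  {x | ∃ a b : ℤ,
    x = (3 * ((a : ℝ) + (2*(s 0 : ℝ) + (s 1 : ℝ) + 3*(p:ℝ)*(δ:ℝ)) / (6*(p:ℝ)))) • b1 +
        ((b : ℝ) + ((s 1 : ℝ) - (p:ℝ)*(δ:ℝ)) / (2*(p:ℝ))) • a2}

/-- The piece `3(ℤ + (2s₂+s₁+3pδ)/(6p)) β₂ + (ℤ + (s₁−pδ)/(2p)) α₁`. -/
def pieceB2 (p : ℕ) (s : Fin 2 → ℤ) (δ : ℤ) : Set (Fin 2 → ℝ) :=
  {x | ∃ a b : ℤ,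
    x = (3 * ((a : ℝ) + (2*(s 1 : ℝ) + (s 0 : ℝ) + 3*(p:ℝ)*(δ:ℝ)) / (6*(p:ℝ)))) • b2 +
        ((b : ℝ) + ((s 0 : ℝ) - (p:ℝ)*(δ:ℝ)) / (2*(p:ℝ))) • a1}

def shiftMu2 (p : ℕ) (s : Fin 2 → ℤ) (ν : Fin 2 → ℤ) : Fin 2 → ℝ :=
  (fun i => (ν i : ℝ)) + mu2 p s

lemma shiftMu2_injective (p : ℕ) (s : Fin 2 → ℤ) : Function.Injective (shiftMu2 p s) := by
  intro ν ν' h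
  funext i
  exact_mod_cast congrFun (add_right_cancel h) i

lemma cosetA2_eq_range (p : ℕ) (s : Fin 2 → ℤ) : cosetA2 p s = Set.range (shiftMu2 p s) := by
  ext x
  exact ⟨fun ⟨ν, hν⟩ => ⟨ν, hν.symm⟩, fun ⟨ν, hν⟩ => ⟨ν, hν.symm⟩⟩

def parityClass {ι : Type*} (i : ι) (δ : ℤ) : Set (ι → ℤ) :=
  {ν | ∃ a, ν i = 2 * a + δ}

lemma parityClass_zero_union_one {ι : Type*} (i : ι) :
    parityClass i 0 ∪ parityClass i 1 = Set.univ := by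
  refine Set.eq_univ_of_forall fun ν => ?_
  rcases Int.even_or_odd' (ν i) with ⟨a, ha | ha⟩
  · exact Or.inl ⟨a, by rw [ha, add_zero]⟩
  · exact Or.inr ⟨a, ha⟩

lemma disjoint_parityClass_zero_one {ι : Type*} (i : ι) :
    Disjoint (parityClass i 0) (parityClass i 1) :=
  Set.disjoint_left.mpr fun _ ⟨_, h₀⟩ ⟨_, h₁⟩ => by omega

lemma range_eq_union_and_disjoint {ι α : Type*} {f : (ι → ℤ) → α}
    (hf : Function.Injective f) (i : ι) :
    Set.range f = f '' parityClass i 0 ∪ f '' parityClass i 1 ∧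
      Disjoint (f '' parityClass i 0) (f '' parityClass i 1) := by
  refine ⟨?_, (Set.disjoint_image_iff hf).mpr (disjoint_parityClass_zero_one i)⟩
  rw [← Set.image_union, parityClass_zero_union_one, Set.image_univ]

section

variable {p : ℕ} (s : Fin 2 → ℤ)

lemma pieceB1_point_eq (hp : (p : ℝ) ≠ 0) (δ a b : ℤ) :
    (3 * ((a : ℝ) + (2*(s 0 : ℝ) + (s 1 : ℝ) + 3*(p:ℝ)*(δ:ℝ)) / (6*(p:ℝ)))) • b1 +
        ((b : ℝ) + ((s 1 : ℝ) - (p:ℝ)*(δ:ℝ)) / (2*(p:ℝ))) • a2 =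
      shiftMu2 p s ![2 * a + δ, a + b] := by
  funext i
  fin_cases i <;>
  · simp [shiftMu2, mu2, b1, b2, a2]
    field_simp
    ring

lemma pieceB2_point_eq (hp : (p : ℝ) ≠ 0) (δ a b : ℤ) :
    (3 * ((a : ℝ) + (2*(s 1 : ℝ) + (s 0 : ℝ) + 3*(p:ℝ)*(δ:ℝ)) / (6*(p:ℝ)))) • b2 +
        ((b : ℝ) + ((s 0 : ℝ) - (p:ℝ)*(δ:ℝ)) / (2*(p:ℝ))) • a1 =
      shiftMu2 p s ![a + b, 2 * a + δ] := by
  funext i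
  fin_cases i <;>
  · simp [shiftMu2, mu2, b1, b2, a1]
    field_simp
    ring

lemma pieceB1_eq_image (hp : (p : ℝ) ≠ 0) (δ : ℤ) :
    pieceB1 p s δ = shiftMu2 p s '' parityClass 0 δ := by
  ext x
  constructor
  · rintro ⟨a, b, rfl⟩
    exact ⟨![2 * a + δ, a + b], ⟨a, rfl⟩, (pieceB1_point_eq s hp δ a b).symm⟩
  · rintro ⟨ν, ⟨a, ha⟩, rfl⟩
    refine ⟨a, ν 1 - a, ?_⟩
    rw [pieceB1_point_eq s hp, ← ha, add_sub_cancel]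
    congr
    ext i
    fin_cases i <;> rfl

lemma pieceB2_eq_image (hp : (p : ℝ) ≠ 0) (δ : ℤ) :
    pieceB2 p s δ = shiftMu2 p s '' parityClass 1 δ := by
  ext x
  constructor
  · rintro ⟨a, b, rfl⟩
    exact ⟨![a + b, 2 * a + δ], ⟨a, rfl⟩, (pieceB2_point_eq s hp δ a b).symm⟩
  · rintro ⟨ν, ⟨a, ha⟩, rfl⟩
    refine ⟨a, ν 0 - a, ?_⟩
    rw [pieceB2_point_eq s hp, ← ha, add_sub_cancel]
    congr
    ext i
    fin_cases i <;> rfl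

end

lemma Q2_smul_a1 (c : ℝ) : Q2 (c • a1) = c ^ 2 := by
  simp [Q2, a1]

lemma Q2_smul_a2 (c : ℝ) : Q2 (c • a2) = c ^ 2 := by
  simp [Q2, a2]

/-- the decompositions of the shifted lattice `A₂ + μ₂(s)` along `β₁, α₂`
and along `β₂, α₁`, both unions being disjoint; and on the span of `α₁` or `α₂` the
quadratic form `Q₂` restricts to the rank-one form `n ↦ n²`. -/
theorem statement13 (p : ℕ) (hp : 0 < p) (s : Fin 2 → ℤ) :
    cosetA2 p s = pieceB1 p s 0 ∪ pieceB1 p s 1 ∧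
    Disjoint (pieceB1 p s 0) (pieceB1 p s 1) ∧
    cosetA2 p s = pieceB2 p s 0 ∪ pieceB2 p s 1 ∧
    Disjoint (pieceB2 p s 0) (pieceB2 p s 1) ∧
    (∀ c : ℝ, Q2 (c • a1) = c ^ 2 ∧ Q2 (c • a2) = c ^ 2) := by
  have hp' : (p : ℝ) ≠ 0 := by exact_mod_cast hp.ne'
  simp only [cosetA2_eq_range, pieceB1_eq_image s hp', pieceB2_eq_image s hp']
  obtain ⟨h₁, d₁⟩ := range_eq_union_and_disjoint (shiftMu2_injective p s) 0
  obtain ⟨h₂, d₂⟩ := range_eq_union_and_disjoint (shiftMu2_injective p s) 1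
  exact ⟨h₁, d₁, h₂, d₂, fun c => ⟨Q2_smul_a1 c, Q2_smul_a2 c⟩⟩
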